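/- In the free symmetric strict monoidal category F(N) on a Petri net N, a marking M′ is reachable from a marking M by firings of N if and only if there exists a morphism M → M′ in F(N) (identifying markings with objects of F(N)). -/

import Mathlib

universe u

/-- A Petri net, with the input and output multisets of each transition
presented as words (lists) via a chosen ordering. -/
structure PetriNet : Type (u + 1) where
  S : Type u
  T : Type u
  src : T → List S
  tgt : T → List S

/-- Formal morphism expressions of the free symmetric strict monoidal category
on a net `N`: objects are words over the places (the free monoid on `N.S`),
and morphisms are generated by identities, one generator `s(u) → t(u)` for
each transition `u`, symmetries, composition and monoidal product (and
recasting along equalities of objects). -/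
inductive Expr (N : PetriNet.{u}) : List N.S → List N.S → Type u
  | id : (X : List N.S) → Expr N X X
  | gen : (u : N.T) → Expr N (N.src u) (N.tgt u)
  | braid : (X Y : List N.S) → Expr N (X ++ Y) (Y ++ X)
  | comp : ∀ {X Y Z}, Expr N X Y → Expr N Y Z → Expr N X Z
  | tensor : ∀ {X Y X' Y'}, Expr N X Y → Expr N X' Y' →
      Expr N (X ++ X') (Y ++ Y')
  | recast : ∀ {X Y X' Y'}, X = X' → Y = Y' → Expr N X Y → Expr N X' Y'

/-- The congruence on morphism expressions generated by exactly the axioms of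
a symmetric strict monoidal category. -/
inductive ExprEq (N : PetriNet.{u}) : ∀ {X Y : List N.S}, Expr N X Y → Expr N X Y → Prop
  | refl : ∀ {X Y} (f : Expr N X Y), ExprEq N f f
  | symm : ∀ {X Y} {f g : Expr N X Y}, ExprEq N f g → ExprEq N g f
  | trans : ∀ {X Y} {f g h : Expr N X Y}, ExprEq N f g → ExprEq N g h → ExprEq N f h
  | comp_congr : ∀ {X Y Z} {f f' : Expr N X Y} {g g' : Expr N Y Z},
      ExprEq N f f' → ExprEq N g g' → ExprEq N (f.comp g) (f'.comp g')
  | tensor_congr : ∀ {X Y X' Y'} {f f' : Expr N X Y} {g g' : Expr N X' Y'},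
      ExprEq N f f' → ExprEq N g g' → ExprEq N (f.tensor g) (f'.tensor g')
  | assoc : ∀ {W X Y Z} (f : Expr N W X) (g : Expr N X Y) (h : Expr N Y Z),
      ExprEq N ((f.comp g).comp h) (f.comp (g.comp h))
  | id_comp : ∀ {X Y} (f : Expr N X Y), ExprEq N ((Expr.id X).comp f) f
  | comp_id : ∀ {X Y} (f : Expr N X Y), ExprEq N (f.comp (Expr.id Y)) f
  | tensor_id : ∀ (X Y : List N.S),
      ExprEq N ((Expr.id X).tensor (Expr.id Y)) (Expr.id (X ++ Y))
  | interchange : ∀ {X₁ Y₁ Z₁ X₂ Y₂ Z₂} (f₁ : Expr N X₁ Y₁) (g₁ : Expr N Y₁ Z₁)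
      (f₂ : Expr N X₂ Y₂) (g₂ : Expr N Y₂ Z₂),
      ExprEq N ((f₁.comp g₁).tensor (f₂.comp g₂)) ((f₁.tensor f₂).comp (g₁.tensor g₂))
  | tensor_assoc : ∀ {X₁ Y₁ X₂ Y₂ X₃ Y₃} (f : Expr N X₁ Y₁) (g : Expr N X₂ Y₂)
      (h : Expr N X₃ Y₃),
      ExprEq N ((f.tensor g).tensor h)
        (Expr.recast (List.append_assoc X₁ X₂ X₃).symm (List.append_assoc Y₁ Y₂ Y₃).symm
          (f.tensor (g.tensor h)))
  | tensor_unit_left : ∀ {X Y} (f : Expr N X Y),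
      ExprEq N ((Expr.id []).tensor f) f
  | tensor_unit_right : ∀ {X Y} (f : Expr N X Y),
      ExprEq N (f.tensor (Expr.id []))
        (Expr.recast (List.append_nil X).symm (List.append_nil Y).symm f)
  | braid_braid : ∀ (X Y : List N.S),
      ExprEq N ((Expr.braid X Y).comp (Expr.braid Y X)) (Expr.id (X ++ Y))
  | braid_natural : ∀ {X X' Y Y'} (f : Expr N X Y) (g : Expr N X' Y'),
      ExprEq N ((f.tensor g).comp (Expr.braid Y Y'))
        ((Expr.braid X X').comp (g.tensor f))
  | hexagon : ∀ (X Y Z : List N.S),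
      ExprEq N
        (Expr.recast (List.append_assoc X Y Z) rfl (Expr.braid (X ++ Y) Z))
        (((Expr.id X).tensor (Expr.braid Y Z)).comp
          (Expr.recast (List.append_assoc X Z Y) (List.append_assoc Z X Y)
            ((Expr.braid X Z).tensor (Expr.id Y))))
  | recast_refl : ∀ {X Y} (f : Expr N X Y), ExprEq N (Expr.recast rfl rfl f) f
  | recast_congr : ∀ {X Y X' Y'} (hX : X = X') (hY : Y = Y') {f g : Expr N X Y},
      ExprEq N f g → ExprEq N (Expr.recast hX hY f) (Expr.recast hX hY g)

/-- Hom-sets of the free symmetric strict monoidal category on `N`: morphism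
expressions modulo exactly the axioms of a symmetric strict monoidal
category. -/
def FreeHom (N : PetriNet.{u}) (X Y : List N.S) : Type u :=
  Quot (@ExprEq N X Y)

def qid (N : PetriNet.{u}) (X : List N.S) : FreeHom N X X :=
  Quot.mk _ (Expr.id X)

def qgen (N : PetriNet.{u}) (u : N.T) : FreeHom N (N.src u) (N.tgt u) :=
  Quot.mk _ (Expr.gen u)

def qbraid (N : PetriNet.{u}) (X Y : List N.S) : FreeHom N (X ++ Y) (Y ++ X) :=
  Quot.mk _ (Expr.braid X Y)

def qcomp {N : PetriNet.{u}} {X Y Z : List N.S}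
    (f : FreeHom N X Y) (g : FreeHom N Y Z) : FreeHom N X Z :=
  Quot.lift
    (fun f' => Quot.lift (fun g' => Quot.mk _ (f'.comp g'))
      (fun _ _ h => Quot.sound (ExprEq.comp_congr (ExprEq.refl f') h)) g)
    (fun f₁ f₂ h => by
      induction g using Quot.ind with
      | _ g' => exact Quot.sound (ExprEq.comp_congr h (ExprEq.refl g'))) f

def qtensor {N : PetriNet.{u}} {X Y X' Y' : List N.S}
    (f : FreeHom N X Y) (g : FreeHom N X' Y') : FreeHom N (X ++ X') (Y ++ Y') :=
  Quot.lift
    (fun f' => Quot.lift (fun g' => Quot.mk _ (f'.tensor g'))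
      (fun _ _ h => Quot.sound (ExprEq.tensor_congr (ExprEq.refl f') h)) g)
    (fun f₁ f₂ h => by
      induction g using Quot.ind with
      | _ g' => exact Quot.sound (ExprEq.tensor_congr h (ExprEq.refl g'))) f

def qrecast {N : PetriNet.{u}} {X Y X' Y' : List N.S} (hX : X = X') (hY : Y = Y')
    (f : FreeHom N X Y) : FreeHom N X' Y' :=
  Quot.lift (fun f' => Quot.mk _ (Expr.recast hX hY f'))
    (fun _ _ h => Quot.sound (ExprEq.recast_congr hX hY h)) f

/-- One firing step in the net `N`: an enabled transition `u` (its input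
multiset is contained in `M`) moves the marking `M` to `M ⊖ s(u) ⊕ t(u)`. -/
def Fires (N : PetriNet.{u}) [DecidableEq N.S] (M M' : Multiset N.S) : Prop :=
  ∃ u : N.T, (N.src u : Multiset N.S) ≤ M ∧
    M' = M - (N.src u : Multiset N.S) + (N.tgt u : Multiset N.S)

/-- Reachability: the reflexive-transitive closure of the firing relation. -/
def Reaches (N : PetriNet.{u}) [DecidableEq N.S] : Multiset N.S → Multiset N.S → Prop :=
  Relation.ReflTransGen (Fires N)

/-!
Each generator `s(u) → t(u)` is a single firing, symmetries merely permute tokens, and firing is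
monotone under adding tokens, so the underlying markings of any morphism expression are related by
reachability. Conversely, symmetries realise every permutation of a word, so a firing of `u` from
a word `X` is the composite `X ≅ s(u) ++ R → t(u) ++ R ≅ Y`, and a firing sequence composes to a
morphism.
-/

section

variable {N : PetriNet.{u}}

lemma Expr.nonempty_of_perm {X Y : List N.S} (h : X.Perm Y) : Nonempty (Expr N X Y) := by
  induction h with
  | nil => exact ⟨Expr.id []⟩
  | cons a _ ih => exact ih.map ((Expr.id [a]).tensor ·)
  | swap x y l => exact ⟨(Expr.braid [y] [x]).tensor (Expr.id l)⟩
  | trans _ _ ih₁ ih₂ =>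
    obtain ⟨f⟩ := ih₁
    obtain ⟨g⟩ := ih₂
    exact ⟨f.comp g⟩

variable [DecidableEq N.S]

lemma Fires.add_right {M M' P : Multiset N.S} (h : Fires N M M') :
    Fires N (M + P) (M' + P) := by
  obtain ⟨u, hle, rfl⟩ := h
  refine ⟨u, hle.trans (Multiset.le_add_right _ _), ?_⟩
  rw [add_right_comm, tsub_add_eq_add_tsub hle]

lemma Reaches.add_right {M M' P : Multiset N.S} (h : Reaches N M M') :
    Reaches N (M + P) (M' + P) := by
  induction h with
  | refl => exact .refl
  | tail _ hstep ih => exact ih.tail hstep.add_right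

lemma Reaches.add {M M' P P' : Multiset N.S} (h : Reaches N M M') (h' : Reaches N P P') :
    Reaches N (M + P) (M' + P') := by
  refine h.add_right.trans ?_
  rw [add_comm M', add_comm M']
  exact h'.add_right

lemma Expr.reaches {X Y : List N.S} (f : Expr N X Y) : Reaches N X Y := by
  induction f with
  | id X => exact .refl
  | gen u => exact .single ⟨u, le_rfl, by simp⟩
  | braid X Y =>
    rw [Multiset.coe_eq_coe.mpr List.perm_append_comm]
    exact .refl
  | comp _ _ ih₁ ih₂ => exact ih₁.trans ih₂
  | tensor _ _ ih₁ ih₂ =>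
    rw [← Multiset.coe_add, ← Multiset.coe_add]
    exact ih₁.add ih₂
  | recast hX hY _ ih =>
    subst hX hY
    exact ih

lemma Expr.nonempty_of_fires {X Y : List N.S} (h : Fires N X Y) : Nonempty (Expr N X Y) := by
  obtain ⟨u, hle, hY⟩ := h
  set R := ((X : Multiset N.S) - N.src u).toList
  have hX : X.Perm (N.src u ++ R) := by
    rw [← Multiset.coe_eq_coe, ← Multiset.coe_add, Multiset.coe_toList, add_tsub_cancel_of_le hle]
  have hY : (N.tgt u ++ R).Perm Y := by
    rw [← Multiset.coe_eq_coe, ← Multiset.coe_add, Multiset.coe_toList, hY, add_comm]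
  obtain ⟨σ⟩ := Expr.nonempty_of_perm hX
  obtain ⟨τ⟩ := Expr.nonempty_of_perm hY
  exact ⟨(σ.comp ((Expr.gen u).tensor (Expr.id R))).comp τ⟩

lemma Expr.nonempty_of_reaches {X Y : List N.S} (h : Reaches N X Y) : Nonempty (Expr N X Y) := by
  generalize hM : (Y : Multiset N.S) = M at h
  induction h generalizing Y with
  | refl => exact Expr.nonempty_of_perm (Multiset.coe_eq_coe.mp hM.symm)
  | @tail M' _ _ hstep ih =>
    obtain ⟨f⟩ := ih (Y := M'.toList) (Multiset.coe_toList M')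
    obtain ⟨g⟩ := Expr.nonempty_of_fires (N := N) (X := M'.toList) (Y := Y)
      (by rwa [Multiset.coe_toList, hM])
    exact ⟨f.comp g⟩

end

/-- In the free symmetric strict monoidal category `F(N)` on a Petri net `N`,
a marking `M'` is reachable from a marking `M` by firings of `N` if and only
if there is a morphism `M → M'` in `F(N)` (identifying markings, i.e.
multisets of places, with objects of `F(N)` presented as words). -/
theorem reachable_iff_morphism (N : PetriNet.{u}) [DecidableEq N.S] (X Y : List N.S) :
    Reaches N (X : Multiset N.S) (Y : Multiset N.S) ↔ Nonempty (FreeHom N X Y) := by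
  constructor
  · intro h
    exact (Expr.nonempty_of_reaches h).map (Quot.mk _)
  · rintro ⟨f⟩
    induction f using Quot.ind with
    | mk e => exact e.reaches
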